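/- In the saddle-point setting, with the block-diagonal preconditioner M_D = [[F, 0],[0, H2]] and H = blockdiag(H1, H2), the preconditioned matrix satisfies ‖M_D⁻¹K‖_H ≤ 1 + 2C₁. -/

import Mathlib

open Matrix

/-- The `H`-norm of a vector: `‖u‖_H = (uᵀ H u)^{1/2}`. -/
noncomputable def vnorm {α : Type*} [Fintype α] (H : Matrix α α ℝ) (u : α → ℝ) : ℝ :=
  Real.sqrt (u ⬝ᵥ (H *ᵥ u))

/-- The weighted operator norm `‖M‖_{H1,H2} = sup_{v ≠ 0} ‖M v‖_{H2} / ‖v‖_{H1}`.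
For a square matrix, `‖M‖_H = wnorm H H M`; the spectral norm is `wnorm 1 1 M`. -/
noncomputable def wnorm {α β : Type*} [Fintype α] [Fintype β]
    (H1 : Matrix α α ℝ) (H2 : Matrix β β ℝ) (M : Matrix β α ℝ) : ℝ :=
  sSup {r : ℝ | ∃ v : α → ℝ, v ≠ 0 ∧ r = vnorm H2 (M *ᵥ v) / vnorm H1 v}

/-! `vnorm H` is the norm of the inner product `(u, v) ↦ uᵀ H v`, so the triangle and
Cauchy–Schwarz inequalities hold for it. The preconditioned matrix is
`M_D⁻¹ K = [[1, F⁻¹Bᵀ], [H2⁻¹B, 0]]`, and its blocks are controlled as follows: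
`‖F⁻¹w‖_{H1} ≤ ‖w‖_{H1⁻¹}` because `xᵀFx = xᵀH1x`, `‖H2⁻¹Bu‖_{H2} = ‖Bu‖_{H2⁻¹} ≤ C₁‖u‖_{H1}`,
and by duality `‖Bᵀp‖_{H1⁻¹} ≤ C₁‖p‖_{H2}`. Hence for `v = (u, p)` the two components of
`M_D⁻¹ K v` are bounded by `‖u‖ + C₁‖p‖` and `C₁‖u‖`, which gives the factor `1 + 2C₁`. -/

theorem LinearMap.exists_norm_map_le {E F : Type*} [NormedAddCommGroup E] [NormedSpace ℝ E]
    [FiniteDimensional ℝ E] [NormedAddCommGroup F] [NormedSpace ℝ F] (f : E →ₗ[ℝ] F) :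
    ∃ C, ∀ x, ‖f x‖ ≤ C * ‖x‖ :=
  ⟨_, (LinearMap.toContinuousLinearMap f).le_opNorm⟩

lemma Real.sqrt_sq_add_sq_le {a b c X Y : ℝ} (hc : 0 ≤ c) (hX0 : 0 ≤ X) (hY0 : 0 ≤ Y)
    (hX : X ≤ a + c * b) (hY : Y ≤ c * a) :
    √(X ^ 2 + Y ^ 2) ≤ (1 + 2 * c) * √(a ^ 2 + b ^ 2) := by
  rw [← Real.sqrt_sq (by positivity : 0 ≤ 1 + 2 * c), ← Real.sqrt_mul (sq_nonneg _)]
  apply Real.sqrt_le_sqrt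
  have hX2 : X ^ 2 ≤ (a + c * b) ^ 2 := pow_le_pow_left₀ hX0 hX 2
  have hY2 : Y ^ 2 ≤ (c * a) ^ 2 := pow_le_pow_left₀ hY0 hY 2
  nlinarith [mul_nonneg hc (sq_nonneg (a - b)), mul_nonneg (mul_nonneg hc hc) (sq_nonneg b)]

lemma Matrix.mulVec_inv_mulVec {α R : Type*} [Fintype α] [DecidableEq α] [CommRing R]
    {A : Matrix α α R} (hA : IsUnit A.det) (w : α → R) : A *ᵥ (A⁻¹ *ᵥ w) = w := by
  rw [mulVec_mulVec, mul_nonsing_inv _ hA, one_mulVec]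

section WeightedNorm

variable {α β : Type*} [Fintype α] [Fintype β] {H : Matrix α α ℝ}

lemma vnorm_nonneg (H : Matrix α α ℝ) (u : α → ℝ) : 0 ≤ vnorm H u := Real.sqrt_nonneg _

lemma vnorm_pos (hH : H.PosDef) {u : α → ℝ} (hu : u ≠ 0) : 0 < vnorm H u :=
  Real.sqrt_pos.2 (by simpa using hH.dotProduct_mulVec_pos hu)

lemma vnorm_sq (hH : H.PosSemidef) (u : α → ℝ) : vnorm H u ^ 2 = u ⬝ᵥ (H *ᵥ u) :=
  Real.sq_sqrt (by simpa using hH.dotProduct_mulVec_nonneg u)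

lemma vnorm_eq_norm (hH : H.PosSemidef) (u : α → ℝ) :
    vnorm H u = @norm _ (H.toSeminormedAddCommGroup hH).toNorm u := by
  let := H.toSeminormedAddCommGroup hH
  let := H.toInnerProductSpace hH
  rw [vnorm, dotProduct_comm]
  exact (norm_eq_sqrt_real_inner u).symm

lemma vnorm_add_le (hH : H.PosSemidef) (u v : α → ℝ) :
    vnorm H (u + v) ≤ vnorm H u + vnorm H v := by
  simpa only [vnorm_eq_norm hH] using
    @norm_add_le _ (H.toSeminormedAddCommGroup hH).toSeminormedAddGroup u v

lemma dotProduct_mulVec_le_vnorm_mul_vnorm (hH : H.PosSemidef) (u v : α → ℝ) :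
    u ⬝ᵥ (H *ᵥ v) ≤ vnorm H u * vnorm H v := by
  let := H.toSeminormedAddCommGroup hH
  let := H.toInnerProductSpace hH
  rw [vnorm_eq_norm hH, vnorm_eq_norm hH, dotProduct_comm]
  exact real_inner_le_norm u v

lemma vnorm_inv_mulVec [DecidableEq α] (hH : H.PosDef) (w : α → ℝ) :
    vnorm H (H⁻¹ *ᵥ w) = vnorm H⁻¹ w := by
  rw [vnorm, vnorm, mulVec_inv_mulVec hH.det_pos.ne'.isUnit, dotProduct_comm]

lemma dotProduct_le_vnorm_mul_vnorm_inv [DecidableEq α] (hH : H.PosDef) (x w : α → ℝ) :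
    x ⬝ᵥ w ≤ vnorm H x * vnorm H⁻¹ w := by
  have h := dotProduct_mulVec_le_vnorm_mul_vnorm hH.posSemidef x (H⁻¹ *ᵥ w)
  rwa [mulVec_inv_mulVec hH.det_pos.ne'.isUnit, vnorm_inv_mulVec hH] at h

lemma exists_vnorm_mulVec_le {H1 : Matrix α α ℝ} {H2 : Matrix β β ℝ} (h1 : H1.PosDef)
    (h2 : H2.PosDef) (M : Matrix β α ℝ) : ∃ C, ∀ v, vnorm H2 (M *ᵥ v) ≤ C * vnorm H1 v := by
  obtain ⟨C, hC⟩ := @LinearMap.exists_norm_map_le (α → ℝ) (β → ℝ) (H1.toNormedAddCommGroup h1)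
    (H1.toInnerProductSpace h1.posSemidef).toNormedSpace _ (H2.toNormedAddCommGroup h2)
    (H2.toInnerProductSpace h2.posSemidef).toNormedSpace M.mulVecLin
  refine ⟨C, fun v => ?_⟩
  rw [vnorm_eq_norm h1.posSemidef, vnorm_eq_norm h2.posSemidef]
  exact hC v

lemma wnorm_nonneg (H1 : Matrix α α ℝ) (H2 : Matrix β β ℝ) (M : Matrix β α ℝ) :
    0 ≤ wnorm H1 H2 M := by
  refine Real.sSup_nonneg fun r ⟨v, _, hr⟩ => ?_
  rw [hr]
  exact div_nonneg (vnorm_nonneg _ _) (vnorm_nonneg _ _)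

lemma vnorm_mulVec_le_of_wnorm_le {H1 : Matrix α α ℝ} {H2 : Matrix β β ℝ} (h1 : H1.PosDef)
    (h2 : H2.PosDef) {M : Matrix β α ℝ} {C : ℝ} (h : wnorm H1 H2 M ≤ C) (v : α → ℝ) :
    vnorm H2 (M *ᵥ v) ≤ C * vnorm H1 v := by
  rcases eq_or_ne v 0 with rfl | hv
  · simp [vnorm]
  obtain ⟨D, hD⟩ := exists_vnorm_mulVec_le h1 h2 M
  -- `sSup` of a set of reals that is not bounded above is `0`, so this is where `D` is needed.
  have hbdd : BddAbove {r | ∃ v, v ≠ 0 ∧ r = vnorm H2 (M *ᵥ v) / vnorm H1 v} := by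
    refine ⟨D, fun r ⟨w, hw, hr⟩ => ?_⟩
    rw [hr, div_le_iff₀ (vnorm_pos h1 hw)]
    exact hD w
  rw [← div_le_iff₀ (vnorm_pos h1 hv)]
  exact (le_csSup hbdd ⟨v, hv, rfl⟩).trans h

lemma wnorm_le_of_forall_vnorm_mulVec_le {H1 : Matrix α α ℝ} {H2 : Matrix β β ℝ}
    {M : Matrix β α ℝ} {C : ℝ} (hC : 0 ≤ C) (h : ∀ v, vnorm H2 (M *ᵥ v) ≤ C * vnorm H1 v) :
    wnorm H1 H2 M ≤ C := by
  refine Real.sSup_le (fun r ⟨v, _, hr⟩ => ?_) hC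
  rw [hr]
  rcases (vnorm_nonneg H1 v).eq_or_lt with h0 | hpos
  · rw [← h0, div_zero]
    exact hC
  · exact (div_le_iff₀ hpos).2 (h v)

end WeightedNorm

section SaddlePoint

variable {ι κ : Type*} [Fintype ι] [Fintype κ]

lemma dotProduct_mulVec_symmPart (F : Matrix ι ι ℝ) (x : ι → ℝ) :
    x ⬝ᵥ ((((1 : ℝ) / 2) • (F + Fᵀ)) *ᵥ x) = x ⬝ᵥ (F *ᵥ x) := by
  have htr : x ⬝ᵥ (Fᵀ *ᵥ x) = x ⬝ᵥ (F *ᵥ x) := by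
    rw [mulVec_transpose, dotProduct_comm, dotProduct_mulVec]
  simp only [smul_mulVec, dotProduct_smul, add_mulVec, dotProduct_add, smul_eq_mul, htr]
  ring

lemma vnorm_fromBlocks_sumElim (H1 : Matrix ι ι ℝ) (H2 : Matrix κ κ ℝ) (x : ι → ℝ)
    (y : κ → ℝ) :
    vnorm (fromBlocks H1 0 0 H2) (Sum.elim x y) = √(x ⬝ᵥ (H1 *ᵥ x) + y ⬝ᵥ (H2 *ᵥ y)) := by
  rw [vnorm, fromBlocks_mulVec]
  simp only [Sum.elim_comp_inl, Sum.elim_comp_inr, zero_mulVec, add_zero, zero_add,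
    sumElim_dotProduct_sumElim]

variable [DecidableEq ι] [DecidableEq κ] {F H1 : Matrix ι ι ℝ} {H2 : Matrix κ κ ℝ}
  {B : Matrix κ ι ℝ}

lemma isUnit_det_of_dotProduct_mulVec_eq (hH1 : H1.PosDef)
    (hFH : ∀ x, x ⬝ᵥ (F *ᵥ x) = x ⬝ᵥ (H1 *ᵥ x)) : IsUnit F.det := by
  rw [isUnit_iff_ne_zero]
  intro hdet
  obtain ⟨v, hv0, hv⟩ := exists_mulVec_eq_zero_iff.mpr hdet
  have hpos := hH1.dotProduct_mulVec_pos hv0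
  rw [star_trivial, ← hFH, hv, dotProduct_zero] at hpos
  exact hpos.false

lemma vnorm_inv_mulVec_le_of_dotProduct_mulVec_eq (hH1 : H1.PosDef)
    (hFH : ∀ x, x ⬝ᵥ (F *ᵥ x) = x ⬝ᵥ (H1 *ᵥ x)) (w : ι → ℝ) :
    vnorm H1 (F⁻¹ *ᵥ w) ≤ vnorm H1⁻¹ w := by
  set x := F⁻¹ *ᵥ w
  have hFx : F *ᵥ x = w := mulVec_inv_mulVec (isUnit_det_of_dotProduct_mulVec_eq hH1 hFH) w
  have hsq : vnorm H1 x ^ 2 ≤ vnorm H1 x * vnorm H1⁻¹ w := by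
    rw [vnorm_sq hH1.posSemidef, ← hFH, hFx]
    exact dotProduct_le_vnorm_mul_vnorm_inv hH1 x w
  nlinarith [vnorm_nonneg H1 x, vnorm_nonneg H1⁻¹ w]

lemma vnorm_transpose_mulVec_le (hH1 : H1.PosDef) (hH2 : H2.PosDef) {C : ℝ} (hC : 0 ≤ C)
    (hB : ∀ u, vnorm H2⁻¹ (B *ᵥ u) ≤ C * vnorm H1 u) (p : κ → ℝ) :
    vnorm H1⁻¹ (Bᵀ *ᵥ p) ≤ C * vnorm H2 p := by
  set w := Bᵀ *ᵥ p
  have hsq : vnorm H1⁻¹ w ^ 2 ≤ C * vnorm H2 p * vnorm H1⁻¹ w :=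
    calc vnorm H1⁻¹ w ^ 2 = p ⬝ᵥ (B *ᵥ (H1⁻¹ *ᵥ w)) := by
          rw [vnorm_sq hH1.inv.posSemidef, dotProduct_mulVec p, ← mulVec_transpose]
      _ ≤ vnorm H2 p * vnorm H2⁻¹ (B *ᵥ (H1⁻¹ *ᵥ w)) :=
          dotProduct_le_vnorm_mul_vnorm_inv hH2 p _
      _ ≤ vnorm H2 p * (C * vnorm H1⁻¹ w) := by
          rw [← vnorm_inv_mulVec hH1]
          exact mul_le_mul_of_nonneg_left (hB _) (vnorm_nonneg _ _)
      _ = C * vnorm H2 p * vnorm H1⁻¹ w := by ring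
  nlinarith [vnorm_nonneg H1⁻¹ w, mul_nonneg hC (vnorm_nonneg H2 p)]

lemma inv_fromBlocks_mul_fromBlocks (hF : IsUnit F.det) (hH2 : IsUnit H2.det) :
    (fromBlocks F 0 0 H2)⁻¹ * fromBlocks F Bᵀ B 0 = fromBlocks 1 (F⁻¹ * Bᵀ) (H2⁻¹ * B) 0 := by
  rw [inv_fromBlocks_zero₂₁_of_isUnit_iff _ _ _
      (iff_of_true ((isUnit_iff_isUnit_det F).2 hF) ((isUnit_iff_isUnit_det H2).2 hH2)),
    fromBlocks_multiply]
  simp [nonsing_inv_mul _ hF]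

lemma vnorm_inv_fromBlocks_mul_fromBlocks_mulVec_le (hH1 : H1.PosDef) (hH2 : H2.PosDef)
    (hFH : ∀ x, x ⬝ᵥ (F *ᵥ x) = x ⬝ᵥ (H1 *ᵥ x)) {C : ℝ} (hC : 0 ≤ C)
    (hB : ∀ u, vnorm H2⁻¹ (B *ᵥ u) ≤ C * vnorm H1 u) (v : ι ⊕ κ → ℝ) :
    vnorm (fromBlocks H1 0 0 H2) (((fromBlocks F 0 0 H2)⁻¹ * fromBlocks F Bᵀ B 0) *ᵥ v) ≤
      (1 + 2 * C) * vnorm (fromBlocks H1 0 0 H2) v := by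
  rw [← Sum.elim_comp_inl_inr v]
  set u := v ∘ Sum.inl
  set p := v ∘ Sum.inr
  have hX : vnorm H1 (u + F⁻¹ *ᵥ (Bᵀ *ᵥ p)) ≤ vnorm H1 u + C * vnorm H2 p :=
    (vnorm_add_le hH1.posSemidef _ _).trans (by
      gcongr
      exact (vnorm_inv_mulVec_le_of_dotProduct_mulVec_eq hH1 hFH _).trans
        (vnorm_transpose_mulVec_le hH1 hH2 hC hB p))
  have hY : vnorm H2 (H2⁻¹ *ᵥ (B *ᵥ u)) ≤ C * vnorm H1 u := by
    rw [vnorm_inv_mulVec hH2]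
    exact hB u
  rw [inv_fromBlocks_mul_fromBlocks (isUnit_det_of_dotProduct_mulVec_eq hH1 hFH)
      hH2.det_pos.ne'.isUnit, fromBlocks_mulVec]
  simp only [Sum.elim_comp_inl, Sum.elim_comp_inr, one_mulVec, zero_mulVec, add_zero,
    ← mulVec_mulVec]
  rw [vnorm_fromBlocks_sumElim, vnorm_fromBlocks_sumElim, ← vnorm_sq hH1.posSemidef,
    ← vnorm_sq hH2.posSemidef, ← vnorm_sq hH1.posSemidef, ← vnorm_sq hH2.posSemidef]
  exact Real.sqrt_sq_add_sq_le hC (vnorm_nonneg _ _) (vnorm_nonneg _ _) hX hY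

end SaddlePoint

theorem stmt_12_general
    {n m : ℕ} (F : Matrix (Fin n) (Fin n) ℝ) (B : Matrix (Fin m) (Fin n) ℝ)
    (H1 : Matrix (Fin n) (Fin n) ℝ) (H2 : Matrix (Fin m) (Fin m) ℝ)
    (C₁ : ℝ)
    (hH1 : H1 = ((1 : ℝ)/2) • (F + Fᵀ))
    (hH1pd : H1.PosDef) (hH2pd : H2.PosDef)
    (hBnorm : wnorm H1 H2⁻¹ B ≤ C₁)
    (K MD H : Matrix (Fin n ⊕ Fin m) (Fin n ⊕ Fin m) ℝ)
    (hK : K = fromBlocks F Bᵀ B 0)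
    (hMD : MD = fromBlocks F 0 0 H2)
    (hH : H = fromBlocks H1 0 0 H2) :
    wnorm H H (MD⁻¹ * K) ≤ 1 + 2 * C₁ := by
  have hFH : ∀ x, x ⬝ᵥ (F *ᵥ x) = x ⬝ᵥ (H1 *ᵥ x) := fun x => by
    rw [hH1, dotProduct_mulVec_symmPart]
  have hC₁ : 0 ≤ C₁ := (wnorm_nonneg _ _ _).trans hBnorm
  subst hK hMD hH
  exact wnorm_le_of_forall_vnorm_mulVec_le (by linarith)
    (vnorm_inv_fromBlocks_mul_fromBlocks_mulVec_le hH1pd hH2pd hFH hC₁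
      (vnorm_mulVec_le_of_wnorm_le hH1pd hH2pd.inv hBnorm))

theorem stmt_12
    {n m : ℕ} (F : Matrix (Fin n) (Fin n) ℝ) (B : Matrix (Fin m) (Fin n) ℝ)
    (H1 N : Matrix (Fin n) (Fin n) ℝ) (H2 : Matrix (Fin m) (Fin m) ℝ)
    (η C₁ C₂ : ℝ) (hη : 0 < η) (hC1 : 0 < C₁) (hC2 : 0 < C₂)
    (hH1 : H1 = ((1 : ℝ)/2) • (F + Fᵀ)) (hN : N = ((1 : ℝ)/2) • (F - Fᵀ))
    (hH1pd : H1.PosDef) (hH2pd : H2.PosDef)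
    (hBrank : B.rank = m)
    (hNnorm : wnorm H1 H1⁻¹ N ≤ η)
    (hBnorm : wnorm H1 H2⁻¹ B ≤ C₁)
    (hinfsup : ∀ x : Fin m → ℝ, x ≠ 0 → C₂ * vnorm H2 x ≤ vnorm H1⁻¹ (Bᵀ *ᵥ x))
    (K MD H : Matrix (Fin n ⊕ Fin m) (Fin n ⊕ Fin m) ℝ)
    (hK : K = fromBlocks F Bᵀ B 0)
    (hMD : MD = fromBlocks F 0 0 H2)
    (hH : H = fromBlocks H1 0 0 H2) :
    wnorm H H (MD⁻¹ * K) ≤ 1 + 2 * C₁ :=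
  stmt_12_general F B H1 H2 C₁ hH1 hH1pd hH2pd hBnorm K MD H hK hMD hH
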